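/- arXiv:math/0511094 — 2 statements merged into one kernel-verified Lean document; each statement's English description precedes it below -/
import Mathlib

section
/- Let F : ℝⁿ → [0,1] be a function that is increasing in each variable separately and satisfies: (a) if xᵢ⁽ᵏ⁾ ↓ xᵢ for each i then F(x₁⁽ᵏ⁾,…,xₙ⁽ᵏ⁾) ↓ F(x₁,…,xₙ); (b) F(x₁,…,xₙ) → 0 whenever some xᵢ → −∞; (c) F(x₁,…,xₙ) → 1 as all xᵢ → +∞; and suppose F arises as F(x₁,…,xₙ) = ν((−∞,x₁],…,(−∞,xₙ]) for a map ν on products of Borel sets that is a measure in each coordinate separately. Then there exists a unique Borel probability measure μ on ℝⁿ with μ((−∞,x₁] × ⋯ × (−∞,xₙ]) = F(x₁,…,xₙ) for all x₁,…,xₙ ∈ ℝ. -/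
/-!
Induction on `n`. Fixing a Borel set `C` in the last coordinate leaves a polymeasure in `n - 1`
variables, hence by induction a finite measure `Φ C` on `ℝⁿ⁻¹`; a π-λ argument shows that
`C ↦ Φ C A` is a measure for every Borel `A`, so `Φ` is a bimeasure on `ℝⁿ⁻¹ × ℝ`. It is
disintegrated along the first factor: the Radon–Nikodym densities of `Φ (-∞, q]` with respect to
`Φ ℝ` form, almost everywhere, a distribution function on `ℚ`, whose Stieltjes extension is a
Markov kernel `κ`, and `Φ ℝ ⊗ κ` is the required measure. Uniqueness holds because the orthants
`(-∞, x]` form a π-system generating the Borel σ-algebra of `ℝⁿ`.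
-/

open MeasureTheory ProbabilityTheory Filter Set Topology
open scoped ENNReal

namespace MeasureTheory.Measure

theorem rnDeriv_le_rnDeriv_of_le {α : Type*} [MeasurableSpace α] {μ₁ μ₂ ν : Measure α}
    [IsFiniteMeasure μ₂] [SigmaFinite ν] (h : μ₁ ≤ μ₂) :
    μ₁.rnDeriv ν ≤ᵐ[ν] μ₂.rnDeriv ν := by
  have : IsFiniteMeasure μ₁ := isFiniteMeasure_of_le μ₂ h
  have hadd := rnDeriv_add μ₁ (μ₂ - μ₁) ν
  rw [add_comm, sub_add_cancel_of_le h] at hadd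
  filter_upwards [hadd] with y hy
  rw [hy, Pi.add_apply]
  exact le_self_add

theorem ext_of_Iic_rat {μ ν : Measure ℝ} [IsFiniteMeasure μ] (huniv : μ univ = ν univ)
    (h : ∀ q : ℚ, μ (Iic q) = ν (Iic q)) : μ = ν := by
  refine ext_of_generate_finite _
    (BorelSpace.measurable_eq.trans Real.borel_eq_generateFrom_Iic_rat) Real.isPiSystem_Iic_rat
    ?_ huniv
  simp only [mem_iUnion, mem_singleton_iff]
  rintro _ ⟨q, rfl⟩
  exact h q

theorem ext_of_pi_Iic {ι : Type*} [Finite ι] {μ ν : Measure (ι → ℝ)} [IsFiniteMeasure μ]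
    (h : ∀ x, μ (Iic x) = ν (Iic x)) : μ = ν := by
  have hspan : ⋃ k : ℕ, Iic (k : ℝ) = univ := iUnion_Iic_of_not_bddAbove_range
    (not_bddAbove_iff.2 fun x => let ⟨k, hk⟩ := exists_nat_gt x; ⟨k, ⟨k, rfl⟩, hk⟩)
  refine ext_of_generateFrom_of_iUnion _ (fun k : ℕ => univ.pi fun _ => Iic (k : ℝ))
    (generateFrom_eq_pi (fun _ => (borel_eq_generateFrom_Iic ℝ).symm.trans
      BorelSpace.measurable_eq.symm) fun _ => ⟨_, fun k => ⟨(k : ℝ), rfl⟩, hspan⟩).symm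
    (IsPiSystem.pi fun _ => isPiSystem_Iic) ?_ (fun k => ⟨_, fun i _ => ⟨(k : ℝ), rfl⟩, rfl⟩)
    (fun _ => measure_ne_top _ _) ?_
  · rw [iUnion_univ_pi_of_monotone fun _ _ _ h => Iic_subset_Iic.2 (Nat.mono_cast h), hspan,
      Set.pi_univ]
  · rintro _ ⟨I, hI, rfl⟩
    choose x hx using fun i => hI i (mem_univ i)
    obtain rfl : I = fun i => Iic (x i) := funext fun i => (hx i).symm
    rw [pi_univ_Iic, h]

end MeasureTheory.Measure

theorem tendsto_measure_Iic_of_antitone (m : Measure ℝ) [IsFiniteMeasure m] {x : ℕ → ℝ}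
    (hx : Antitone x) : Tendsto (fun k => m (Iic (x k))) atTop (𝓝 (m (⋂ k, Iic (x k)))) :=
  tendsto_measure_iInter_atTop (fun _ => nullMeasurableSet_Iic)
    (fun _ _ h => Iic_subset_Iic.2 (hx h)) ⟨0, measure_ne_top _ _⟩

theorem iInter_Iic_add_one_div (t : ℝ) : ⋂ k : ℕ, Iic (t + 1 / (k + 1)) = Iic t := by
  refine Subset.antisymm (fun x hx => ?_) (fun x hx => mem_iInter.2 fun k => ?_)
  · have hlim : Tendsto (fun k : ℕ => t + 1 / ((k : ℝ) + 1)) atTop (𝓝 t) := by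
      simpa using (tendsto_const_nhds (x := t)).add tendsto_one_div_add_atTop_nhds_zero_nat
    exact ge_of_tendsto hlim (Eventually.of_forall fun k => mem_Iic.1 (mem_iInter.1 hx k))
  · exact (mem_Iic.1 hx).trans (le_add_of_nonneg_right (by positivity))

theorem ae_monotone_rnDeriv {X ι : Type*} [MeasurableSpace X] [Countable ι] [Preorder ι]
    {M : Measure X} [SigmaFinite M] {Ψ : ι → Measure X} [∀ i, IsFiniteMeasure (Ψ i)]
    (hΨ : Monotone Ψ) : ∀ᵐ y ∂M, Monotone fun i => (Ψ i).rnDeriv M y := by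
  have h : ∀ i j, ∀ᵐ y ∂M, i ≤ j → (Ψ i).rnDeriv M y ≤ (Ψ j).rnDeriv M y := fun i j => by
    by_cases hij : i ≤ j
    · filter_upwards [Measure.rnDeriv_le_rnDeriv_of_le (hΨ hij)] with y hy _ using hy
    · exact Eventually.of_forall fun _ h => absurd h hij
  filter_upwards [ae_all_iff.2 fun i => ae_all_iff.2 (h i)] with y hy i j hij using hy i j hij

theorem isRatStieltjesPoint_toReal {X : Type*} {f : X → ℚ → ℝ≥0∞} {y : X}
    (hmono : Monotone (f y)) (hle : ∀ q, f y q ≤ 1)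
    (htop : Tendsto (fun k : ℕ => f y k) atTop (𝓝 1))
    (hbot : Tendsto (fun k : ℕ => f y (-k)) atTop (𝓝 0))
    (hright : ∀ q, Tendsto (fun k : ℕ => f y (q + 1 / (k + 1))) atTop (𝓝 (f y q))) :
    IsRatStieltjesPoint (fun y q => (f y q).toReal) y := by
  have hfin : ∀ q, f y q ≠ ∞ := fun q => ne_top_of_le_ne_top ENNReal.one_ne_top (hle q)
  have hmono' : Monotone fun q => (f y q).toReal := fun a b h =>
    ENNReal.toReal_mono (hfin b) (hmono h)
  have htoReal {u : ℕ → ℚ} {a : ℝ≥0∞} (ha : a ≠ ∞)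
      (h : Tendsto (fun k => f y (u k)) atTop (𝓝 a)) :
      Tendsto (fun k => (f y (u k)).toReal) atTop (𝓝 a.toReal) :=
    (ENNReal.tendsto_toReal ha).comp h
  refine ⟨hmono', ?_, ?_, fun q => le_antisymm ?_ (le_ciInf fun r => hmono' r.2.le)⟩
  · refine (tendsto_iff_tendsto_subseq_of_monotone hmono' tendsto_natCast_atTop_atTop).2 ?_
    exact htoReal ENNReal.one_ne_top htop
  · refine tendsto_comp_neg_atTop_iff.1 ((tendsto_iff_tendsto_subseq_of_antitone
      (hmono'.comp_antitone fun a b h => neg_le_neg h) tendsto_natCast_atTop_atTop).2 ?_)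
    exact htoReal ENNReal.zero_ne_top hbot
  · refine ge_of_tendsto (htoReal (hfin q) (hright q)) (Eventually.of_forall fun k => ?_)
    have hbdd : BddBelow (range fun r : Ioi q => (f y r).toReal) :=
      ⟨0, by rintro _ ⟨r, rfl⟩; exact ENNReal.toReal_nonneg⟩
    exact ciInf_le hbdd ⟨q + 1 / (k + 1), lt_add_of_pos_right q (by positivity)⟩

section RatFamily

variable {X : Type*} [MeasurableSpace X] {M : Measure X} [IsFiniteMeasure M]
  {Ψ : ℚ → Measure X} {m : Measure ℝ}

theorem ae_tendsto_rnDeriv_natCast (hmono : Monotone Ψ) (hle : ∀ q, Ψ q ≤ M)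
    (hΨ : ∀ q, Ψ q univ = m (Iic q)) (hM : M univ = m univ) :
    ∀ᵐ y ∂M, Tendsto (fun k : ℕ => (Ψ k).rnDeriv M y) atTop (𝓝 1) := by
  have : ∀ q, IsFiniteMeasure (Ψ q) := fun q => isFiniteMeasure_of_le M (hle q)
  refine tendsto_of_lintegral_tendsto_of_monotone aemeasurable_const ?_ ?_ ?_
    (by simp [measure_ne_top])
  · simp only [Measure.lintegral_rnDeriv (hle _).absolutelyContinuous, hΨ, lintegral_const,
      one_mul, hM, Rat.cast_natCast]
    exact (tendsto_measure_Iic_atTop m).comp tendsto_natCast_atTop_atTop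
  · filter_upwards [ae_monotone_rnDeriv hmono] with y hy using hy.comp Nat.mono_cast
  · filter_upwards [ae_all_iff.2 fun q => Measure.rnDeriv_le_one_of_le (hle q)] with y hy
      using fun k => hy k

theorem ae_tendsto_rnDeriv_neg_natCast [IsFiniteMeasure m] (hmono : Monotone Ψ)
    (hle : ∀ q, Ψ q ≤ M) (hΨ : ∀ q, Ψ q univ = m (Iic q)) :
    ∀ᵐ y ∂M, Tendsto (fun k : ℕ => (Ψ (-k)).rnDeriv M y) atTop (𝓝 0) := by
  have : ∀ q, IsFiniteMeasure (Ψ q) := fun q => isFiniteMeasure_of_le M (hle q)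
  have hanti : Antitone fun k : ℕ => -(k : ℝ) := fun a b h => by simpa using h
  refine tendsto_of_lintegral_tendsto_of_antitone
    (fun _ => (Measure.measurable_rnDeriv _ _).aemeasurable) ?_ ?_ (by simp) ?_
  · simp only [Measure.lintegral_rnDeriv (hle _).absolutelyContinuous, hΨ, lintegral_zero,
      Rat.cast_neg, Rat.cast_natCast]
    convert tendsto_measure_Iic_of_antitone m hanti
    rw [iInter_Iic_eq_empty_iff.2, measure_empty]
    rintro ⟨b, hb⟩
    obtain ⟨k, hk⟩ := exists_nat_gt (-b)
    linarith [hb ⟨k, rfl⟩]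
  · filter_upwards [ae_monotone_rnDeriv hmono] with y hy
    exact hy.comp_antitone fun a b h => by simpa using h
  · simp only [Measure.lintegral_rnDeriv (hle _).absolutelyContinuous]
    exact measure_ne_top _ _

theorem ae_tendsto_rnDeriv_add_one_div [IsFiniteMeasure m] (hmono : Monotone Ψ)
    (hle : ∀ q, Ψ q ≤ M) (hΨ : ∀ q, Ψ q univ = m (Iic q)) (q : ℚ) :
    ∀ᵐ y ∂M, Tendsto (fun k : ℕ => (Ψ (q + 1 / (k + 1))).rnDeriv M y) atTop
      (𝓝 ((Ψ q).rnDeriv M y)) := by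
  have : ∀ q, IsFiniteMeasure (Ψ q) := fun q => isFiniteMeasure_of_le M (hle q)
  have hanti : Antitone fun k : ℕ => q + 1 / ((k : ℚ) + 1) := fun a b h => by
    dsimp only; gcongr
  refine tendsto_of_lintegral_tendsto_of_antitone
    (fun _ => (Measure.measurable_rnDeriv _ _).aemeasurable) ?_ ?_ ?_ ?_
  · simp only [Measure.lintegral_rnDeriv (hle _).absolutelyContinuous, hΨ]
    have := tendsto_measure_Iic_of_antitone m (x := fun k : ℕ => (q : ℝ) + 1 / ((k : ℝ) + 1))
      (fun a b h => by dsimp only; gcongr)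
    rw [iInter_Iic_add_one_div] at this
    simpa using this
  · filter_upwards [ae_monotone_rnDeriv hmono] with y hy using hy.comp_antitone hanti
  · filter_upwards [ae_monotone_rnDeriv hmono] with y hy k
    exact hy (le_add_of_nonneg_right (by positivity))
  · simp only [Measure.lintegral_rnDeriv (hle _).absolutelyContinuous]
    exact measure_ne_top _ _

theorem exists_isMarkovKernel_setLIntegral_Iic [IsFiniteMeasure m] (hmono : Monotone Ψ)
    (hle : ∀ q, Ψ q ≤ M) (hΨ : ∀ q, Ψ q univ = m (Iic q)) (hM : M univ = m univ) :
    ∃ κ : Kernel X ℝ, IsMarkovKernel κ ∧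
      ∀ (q : ℚ) (A : Set X), ∫⁻ y in A, κ y (Iic q) ∂M = Ψ q A := by
  have : ∀ q, IsFiniteMeasure (Ψ q) := fun q => isFiniteMeasure_of_le M (hle q)
  set f : X → ℚ → ℝ≥0∞ := fun y q => (Ψ q).rnDeriv M y
  have hf : Measurable fun y q => (f y q).toReal :=
    measurable_pi_lambda _ fun q => (Measure.measurable_rnDeriv _ _).ennreal_toReal
  have hle_one : ∀ᵐ y ∂M, ∀ q, f y q ≤ 1 :=
    ae_all_iff.2 fun q => Measure.rnDeriv_le_one_of_le (hle q)
  have hpoint : ∀ᵐ y ∂M, IsRatStieltjesPoint (fun y q => (f y q).toReal) y := by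
    filter_upwards [ae_monotone_rnDeriv hmono, hle_one,
      ae_tendsto_rnDeriv_natCast hmono hle hΨ hM, ae_tendsto_rnDeriv_neg_natCast hmono hle hΨ,
      ae_all_iff.2 (ae_tendsto_rnDeriv_add_one_div hmono hle hΨ)] with y h₁ h₂ h₃ h₄ h₅
    exact isRatStieltjesPoint_toReal h₁ h₂ h₃ h₄ h₅
  let κ : Kernel X ℝ := ⟨fun y => (stieltjesOfMeasurableRat _ hf y).measure,
    measurable_measure_stieltjesOfMeasurableRat hf⟩
  refine ⟨κ, ⟨fun _ => inferInstanceAs (IsProbabilityMeasure (StieltjesFunction.measure _))⟩,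
    fun q A => ?_⟩
  calc ∫⁻ y in A, κ y (Iic q) ∂M = ∫⁻ y in A, f y q ∂M := by
        refine lintegral_congr_ae (ae_restrict_of_ae ?_)
        filter_upwards [hpoint, hle_one] with y hy hy_le
        rw [← ENNReal.ofReal_toReal (ne_top_of_le_ne_top ENNReal.one_ne_top (hy_le q))]
        exact (measure_stieltjesOfMeasurableRat_Iic hf y q).trans (by
          rw [stieltjesOfMeasurableRat_eq, toRatCDF_of_isRatStieltjesPoint hy])
    _ = Ψ q A := Measure.setLIntegral_rnDeriv (hle q).absolutelyContinuous A

end RatFamily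

theorem exists_measure_prod_of_bimeasure {X : Type*} [MeasurableSpace X]
    (Φ : Set ℝ → Measure X) [IsFiniteMeasure (Φ univ)]
    (hΦ : ∀ A, MeasurableSet A → ∃ m : Measure ℝ, ∀ C, MeasurableSet C → m C = Φ C A) :
    ∃ π : Measure (X × ℝ), IsFiniteMeasure π ∧
      ∀ A C, MeasurableSet A → MeasurableSet C → π (A ×ˢ C) = Φ C A := by
  choose! m hm using hΦ
  have hfin : ∀ A, MeasurableSet A → IsFiniteMeasure (m A) := fun A hA =>
    ⟨by rw [hm A hA _ .univ]; exact measure_lt_top _ _⟩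
  have hmono : Monotone fun q : ℚ => Φ (Iic q) := fun q r hqr =>
    Measure.le_iff.2 fun A hA => by
      rw [← hm A hA _ measurableSet_Iic, ← hm A hA _ measurableSet_Iic]
      exact measure_mono (Iic_subset_Iic.2 (by exact_mod_cast hqr))
  have hle : ∀ q : ℚ, Φ (Iic q) ≤ Φ univ := fun q => Measure.le_iff.2 fun A hA => by
    rw [← hm A hA _ measurableSet_Iic, ← hm A hA _ .univ]
    exact measure_mono (subset_univ _)
  have := hfin univ .univ
  obtain ⟨κ, hκ, hκΦ⟩ := exists_isMarkovKernel_setLIntegral_Iic hmono hle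
    (fun q => (hm univ .univ _ measurableSet_Iic).symm) (hm univ .univ _ .univ).symm
  refine ⟨Φ univ ⊗ₘ κ, inferInstance, fun A C hA hC => ?_⟩
  have := hfin A hA
  have hslice : ((Φ univ).restrict A).bind κ = m A := by
    refine Measure.ext_of_Iic_rat ?_ fun q => ?_
    · rw [Measure.bind_apply .univ κ.measurable.aemeasurable, hm A hA _ .univ]
      simp
    · rw [Measure.bind_apply measurableSet_Iic κ.measurable.aemeasurable, hκΦ,
        hm A hA _ measurableSet_Iic]
  rw [Measure.compProd_apply_prod hA hC, ← hm A hA C hC, ← hslice,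
    Measure.bind_apply hC κ.measurable.aemeasurable]

theorem exists_measure_slice_of_isPiSystem {X : Type*} [mX : MeasurableSpace X]
    {S : Set (Set X)} (hgen : mX = MeasurableSpace.generateFrom S) (hS : IsPiSystem S)
    {Φ : Set ℝ → Measure X} (hfin : ∀ C, MeasurableSet C → IsFiniteMeasure (Φ C))
    (hbox : ∀ A ∈ S, ∃ μ : Measure ℝ, ∀ C, MeasurableSet C → μ C = Φ C A)
    (huniv : ∃ μ : Measure ℝ, ∀ C, MeasurableSet C → μ C = Φ C univ) :
    ∀ A, MeasurableSet A → ∃ μ : Measure ℝ, ∀ C, MeasurableSet C → μ C = Φ C A := by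
  obtain ⟨μ₁, hμ₁⟩ := huniv
  refine MeasurableSpace.induction_on_inter hgen hS ⟨0, fun C _ => by simp⟩ hbox ?_ ?_
  · rintro A hA ⟨μ, hμ⟩
    have hle : μ ≤ μ₁ := Measure.le_iff.2 fun C hC => by
      rw [hμ C hC, hμ₁ C hC]
      exact measure_mono (subset_univ A)
    have : IsFiniteMeasure μ := ⟨by
      rw [hμ _ .univ]
      have := hfin univ .univ
      exact measure_lt_top _ _⟩
    refine ⟨μ₁ - μ, fun C hC => ?_⟩
    have := hfin C hC
    rw [Measure.sub_apply hC hle, hμ C hC, hμ₁ C hC, measure_compl hA (measure_ne_top _ _)]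
  · intro A hdisj hA hμA
    choose μ hμ using hμA
    refine ⟨Measure.sum μ, fun C hC => ?_⟩
    rw [Measure.sum_apply _ hC, measure_iUnion hdisj hA]
    exact tsum_congr fun k => hμ k C hC

section Snoc

variable {α : Type*} {n : ℕ}

theorem preimage_snoc_univ_pi (B : Fin (n + 1) → Set α) :
    (fun p : (Fin n → α) × α => (Fin.snoc p.1 p.2 : Fin (n + 1) → α)) ⁻¹' univ.pi B =
      univ.pi (fun i => B i.castSucc) ×ˢ B (Fin.last n) := by
  ext ⟨y, t⟩
  simp [Fin.forall_fin_succ']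

theorem measurable_snoc [MeasurableSpace α] :
    Measurable fun p : (Fin n → α) × α => (Fin.snoc p.1 p.2 : Fin (n + 1) → α) := by
  refine measurable_pi_lambda _ fun j => Fin.lastCases ?_ (fun i => ?_) j
  · simp only [Fin.snoc_last]; fun_prop
  · simp only [Fin.snoc_castSucc]; fun_prop

theorem measurableSet_snoc [MeasurableSpace α] {B : Fin n → Set α} {C : Set α}
    (hB : ∀ i, MeasurableSet (B i)) (hC : MeasurableSet C) (j : Fin (n + 1)) :
    MeasurableSet (Fin.snoc (α := fun _ => Set α) B C j) :=
  Fin.lastCases (by simpa using hC) (fun i => by simpa using hB i) j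

end Snoc

def IsPolymeasure {n : ℕ} (ν : (Fin n → Set ℝ) → ℝ≥0∞) : Prop :=
  ∀ (i : Fin n) (B : Fin n → Set ℝ), (∀ j, MeasurableSet (B j)) →
    ∃ m : Measure ℝ, ∀ C : Set ℝ, MeasurableSet C → m C = ν (Function.update B i C)

namespace IsPolymeasure

variable {n : ℕ} {ν : (Fin (n + 1) → Set ℝ) → ℝ≥0∞}

theorem snoc (hν : IsPolymeasure ν) {C : Set ℝ} (hC : MeasurableSet C) :
    IsPolymeasure fun B => ν (Fin.snoc B C) := by
  intro i B hB
  obtain ⟨m, hm⟩ := hν i.castSucc (Fin.snoc B C) (measurableSet_snoc hB hC)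
  exact ⟨m, fun D hD => by rw [hm D hD, ← Fin.snoc_update]⟩

theorem exists_measure_last (hν : IsPolymeasure ν) {B : Fin n → Set ℝ}
    (hB : ∀ i, MeasurableSet (B i)) :
    ∃ m : Measure ℝ, ∀ C, MeasurableSet C → m C = ν (Fin.snoc B C) := by
  obtain ⟨m, hm⟩ := hν (Fin.last n) (Fin.snoc B univ) (measurableSet_snoc hB .univ)
  exact ⟨m, fun C hC => by rw [hm C hC, Fin.update_snoc_last]⟩

end IsPolymeasure

theorem IsPolymeasure.exists_measure_pi :
    ∀ {n : ℕ} {ν : (Fin n → Set ℝ) → ℝ≥0∞}, IsPolymeasure ν → ν (fun _ => univ) ≠ ∞ →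
      ∃ μ : Measure (Fin n → ℝ), IsFiniteMeasure μ ∧
        ∀ B : Fin n → Set ℝ, (∀ i, MeasurableSet (B i)) → μ (univ.pi B) = ν B
  | 0, ν, _, hfin => by
    refine ⟨ν (fun _ => univ) • Measure.dirac finZeroElim, ⟨by simpa using hfin.lt_top⟩,
      fun B _ => ?_⟩
    rw [Subsingleton.elim B fun _ => univ, pi_univ]
    simp
  | n + 1, ν, hν, hfin => by
    have hsnoc_univ : (Fin.snoc (fun _ => univ) univ : Fin (n + 1) → Set ℝ) = fun _ => univ :=
      funext fun j => Fin.lastCases (by simp) (fun i => by simp) j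
    obtain ⟨m₀, hm₀⟩ := hν.exists_measure_last (B := fun _ => univ) fun _ => .univ
    have hslice : ∀ C, MeasurableSet C → ∃ μ : Measure (Fin n → ℝ), IsFiniteMeasure μ ∧
        ∀ B : Fin n → Set ℝ, (∀ i, MeasurableSet (B i)) → μ (univ.pi B) = ν (Fin.snoc B C) :=
      fun C hC => exists_measure_pi (hν.snoc hC) <| by
        rw [← hm₀ C hC]
        refine ne_top_of_le_ne_top ?_ (measure_mono (subset_univ C))
        rwa [hm₀ univ .univ, hsnoc_univ]
    choose! Φ hΦfin hΦ using hslice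
    have := hΦfin univ .univ
    have hbimeasure := exists_measure_slice_of_isPiSystem generateFrom_pi.symm isPiSystem_pi
      hΦfin (by
        rintro _ ⟨B, hB, rfl⟩
        obtain ⟨m, hm⟩ := hν.exists_measure_last fun i => hB i (mem_univ i)
        exact ⟨m, fun C hC => by rw [hm C hC, hΦ C hC B fun i => hB i (mem_univ i)]⟩)
      ⟨m₀, fun C hC => by rw [hm₀ C hC, ← pi_univ, hΦ C hC _ fun _ => .univ]⟩
    obtain ⟨π, hπfin, hπ⟩ := exists_measure_prod_of_bimeasure Φ hbimeasure
    refine ⟨π.map fun p => Fin.snoc p.1 p.2, inferInstance, fun B hB => ?_⟩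
    rw [Measure.map_apply measurable_snoc (.univ_pi hB), preimage_snoc_univ_pi,
      hπ _ _ (.univ_pi fun i => hB _) (hB _), hΦ _ (hB _) _ fun i => hB _]
    exact congrArg ν (Fin.snoc_init_self B)

theorem exists_unique_measure_of_distribution_function_general (n : ℕ)
    (ν : (Fin n → Set ℝ) → ENNReal) (F : (Fin n → ℝ) → ℝ)
    (hν1 : ν (fun _ => Set.univ) = 1)
    (hνmeas : ∀ (i : Fin n) (B : Fin n → Set ℝ), (∀ j, MeasurableSet (B j)) →
      ∃ m : Measure ℝ, ∀ C : Set ℝ, MeasurableSet C → m C = ν (Function.update B i C))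
    (hF : ∀ x : Fin n → ℝ, ν (fun i => Set.Iic (x i)) = ENNReal.ofReal (F x)) :
    ∃! μ : Measure (Fin n → ℝ), IsProbabilityMeasure μ ∧
      ∀ x : Fin n → ℝ, μ (Set.univ.pi fun i => Set.Iic (x i)) = ENNReal.ofReal (F x) := by
  obtain ⟨μ, -, hμ⟩ := IsPolymeasure.exists_measure_pi hνmeas (by simp [hν1])
  have hprob : IsProbabilityMeasure μ := ⟨by rw [← Set.pi_univ, hμ _ fun _ => .univ, hν1]⟩
  have hIic : ∀ x : Fin n → ℝ, μ (Set.univ.pi fun i => Set.Iic (x i)) = ENNReal.ofReal (F x) :=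
    fun x => (hμ _ fun _ => measurableSet_Iic).trans (hF x)
  refine ⟨μ, ⟨hprob, hIic⟩, fun μ' ⟨_, hIic'⟩ => Measure.ext_of_pi_Iic fun x => ?_⟩
  rw [← pi_univ_Iic, hIic', hIic]

/-- Let `F : ℝⁿ → [0,1]` be increasing in each variable, continuous from
above, tending to `0` when some coordinate tends to `−∞` and to `1` when all coordinates
tend to `+∞`, and arising as `F(x) = ν((−∞,x₁],…,(−∞,xₙ])` for a set function `ν` on
products of Borel sets which is a measure in each coordinate separately (normalized by
`ν(ℝ,…,ℝ) = 1`).  Then there is a unique Borel probability measure `μ` on `ℝⁿ` with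
`μ((−∞,x₁] × ⋯ × (−∞,xₙ]) = F(x₁,…,xₙ)` for all `x`. -/
theorem exists_unique_measure_of_distribution_function (n : ℕ)
    (ν : (Fin n → Set ℝ) → ENNReal) (F : (Fin n → ℝ) → ℝ)
    (hν1 : ν (fun _ => Set.univ) = 1)
    (hνmeas : ∀ (i : Fin n) (B : Fin n → Set ℝ), (∀ j, MeasurableSet (B j)) →
      ∃ m : Measure ℝ, ∀ C : Set ℝ, MeasurableSet C → m C = ν (Function.update B i C))
    (hF : ∀ x : Fin n → ℝ, ν (fun i => Set.Iic (x i)) = ENNReal.ofReal (F x))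
    (hrange : ∀ x, F x ∈ Set.Icc (0 : ℝ) 1)
    (hmono : ∀ (i : Fin n) (x : Fin n → ℝ), Monotone fun t => F (Function.update x i t))
    (ha : ∀ (x : Fin n → ℝ) (xk : ℕ → Fin n → ℝ),
      (∀ i, Antitone fun k => xk k i) → (∀ i, Tendsto (fun k => xk k i) atTop (nhds (x i))) →
      Tendsto (fun k => F (xk k)) atTop (nhds (F x)))
    (hb : ∀ (x : Fin n → ℝ) (i : Fin n),
      Tendsto (fun t => F (Function.update x i t)) atBot (nhds 0))
    (hc : Tendsto (fun t : ℝ => F (fun _ => t)) atTop (nhds 1)) :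
    ∃! μ : Measure (Fin n → ℝ), IsProbabilityMeasure μ ∧
      ∀ x : Fin n → ℝ, μ (Set.univ.pi fun i => Set.Iic (x i)) = ENNReal.ofReal (F x) :=
  exists_unique_measure_of_distribution_function_general n ν F hν1 hνmeas hF
end

section
/- Let (X₁,d₁),…,(Xₙ,dₙ) be uncountable complete separable metric spaces, and let ν : B(X₁) × ⋯ × B(Xₙ) → [0,∞) be a set function that is a countably additive measure in each coordinate separately (with the other coordinates fixed). Then there exists a unique measure μ on the product σ-algebra ⊗ᵢ B(Xᵢ) such that μ(B₁ × ⋯ × Bₙ) = ν(B₁,…,Bₙ) for all Borel sets Bᵢ ⊆ Xᵢ. -/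
/-!
Induct on the number of factors. Splitting off `X 0`, the inductive hypothesis turns `ν` into a
family `A ↦ κ A` of finite measures on `Y = ∏_{j ≥ 1} X j`; since finite measures are determined by
their values on rectangles, `A ↦ κ A S` is countably additive for every Borel `S`, so
`(A, S) ↦ κ A S` is a bimeasure on `X 0 × Y`, with `Y` standard Borel.

A bimeasure `β` of finite mass on `Z × Y` with `Y` standard Borel extends to a measure. Embedding
`Y` into `ℝ`, it suffices to treat `Y = ℝ`. Let `ρ = β(·, univ)` and let `g q` be the
Radon–Nikodym derivative of `β(·, Iic q)` with respect to `ρ`. Countable additivity of `β` in the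
second variable, tested against every `A`, shows that for `ρ`-a.e. `z` the function `q ↦ g q z`
is the restriction to `ℚ` of a distribution function; this yields a Markov kernel `K` with
`K z (Iic q) = g q z` a.e., and `ρ ⊗ K` agrees with `β` on rectangles.
-/

open MeasureTheory ProbabilityTheory Set Filter
open scoped ENNReal Topology

namespace MeasureTheory

theorem Measure.ext_of_univ_pi {ι : Type*} [Finite ι] {X : ι → Type*}
    [∀ i, MeasurableSpace (X i)] {μ ν : Measure (∀ i, X i)} [IsFiniteMeasure μ]
    (h : ∀ B : ∀ i, Set (X i), (∀ i, MeasurableSet (B i)) → μ (univ.pi B) = ν (univ.pi B)) :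
    μ = ν :=
  ext_of_generate_finite _ generateFrom_pi.symm isPiSystem_pi
    (by rintro _ ⟨B, hB, rfl⟩; exact h B fun i => hB i trivial)
    (by simpa using h (fun _ => univ) fun _ => .univ)

theorem Measure.ext_of_Iic_rat_s8 {μ ν : Measure ℝ} [IsFiniteMeasure μ]
    (h : ∀ q : ℚ, μ (Iic q) = ν (Iic q)) (huniv : μ univ = ν univ) : μ = ν :=
  ext_of_generate_finite _ (BorelSpace.measurable_eq.trans Real.borel_eq_generateFrom_Iic_rat)
    Real.isPiSystem_Iic_rat (by simpa using h) huniv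

theorem isRatStieltjesPoint_toReal {Z : Type*} {g : ℚ → Z → ℝ≥0∞} {z : Z}
    (hmono : Monotone fun q => g q z) (hle : ∀ q, g q z ≤ 1)
    (htop : Tendsto (fun n : ℕ => g n z) atTop (𝓝 1))
    (hbot : Tendsto (fun n : ℕ => g (-n) z) atTop (𝓝 0))
    (hright : ∀ q, Tendsto (fun n : ℕ => g (q + ((n : ℚ) + 1)⁻¹) z) atTop (𝓝 (g q z))) :
    IsRatStieltjesPoint (fun z q => (g q z).toReal) z := by
  have hfin : ∀ q, g q z ≠ ∞ := fun q => ne_top_of_le_ne_top ENNReal.one_ne_top (hle q)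
  have hmono' : Monotone fun q => (g q z).toReal := fun q r hqr =>
    ENNReal.toReal_mono (hfin r) (hmono hqr)
  have hlim : ∀ {u : ℕ → ℚ} {a : ℝ≥0∞}, a ≠ ∞ → Tendsto (fun n => g (u n) z) atTop (𝓝 a) →
      Tendsto (fun n => (g (u n) z).toReal) atTop (𝓝 a.toReal) :=
    fun ha hu => (ENNReal.tendsto_toReal ha).comp hu
  refine ⟨hmono', ?_, ?_, fun q => ?_⟩
  · exact (tendsto_iff_tendsto_subseq_of_monotone hmono' tendsto_natCast_atTop_atTop).2
      (by simpa [Function.comp_def] using hlim ENNReal.one_ne_top htop)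
  · rw [← tendsto_comp_neg_atTop_iff]
    exact (tendsto_iff_tendsto_subseq_of_antitone (hmono'.comp_antitone fun _ _ => neg_le_neg)
      tendsto_natCast_atTop_atTop).2
      (by simpa [Function.comp_def] using hlim ENNReal.zero_ne_top hbot)
  · refine le_antisymm (ge_of_tendsto' (hlim (hfin q) (hright q)) fun n =>
      ciInf_le (f := fun r : Ioi q => (g r z).toReal) ?_ ⟨q + ((n : ℚ) + 1)⁻¹, ?_⟩)
      (le_ciInf fun r => hmono' r.2.le)
    · exact ⟨0, by rintro _ ⟨r, rfl⟩; exact ENNReal.toReal_nonneg⟩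
    · exact lt_add_of_pos_right q (by positivity)

variable {Z : Type*} [MeasurableSpace Z]

/-- `g · z` is meant to be, on `ℚ`, the distribution function of the fibre over `z` of a measure on
`Z × ℝ` whose value on `A ×ˢ S` is `m A S`. -/
structure IsRatCDFDensity (ρ : Measure Z) (m : Set Z → Measure ℝ) (g : ℚ → Z → ℝ≥0∞) :
    Prop where
  measurable (q : ℚ) : Measurable (g q)
  setLIntegral_eq (q : ℚ) {A : Set Z} : MeasurableSet A → ∫⁻ z in A, g q z ∂ρ = m A (Iic q)
  apply_univ {A : Set Z} : MeasurableSet A → m A univ = ρ A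

namespace IsRatCDFDensity

variable {ρ : Measure Z} {m : Set Z → Measure ℝ} {g : ℚ → Z → ℝ≥0∞}

theorem lintegral_eq (h : IsRatCDFDensity ρ m g) (q : ℚ) :
    ∫⁻ z, g q z ∂ρ = m univ (Iic q) := by
  rw [← setLIntegral_univ, h.setLIntegral_eq q .univ]

variable [IsFiniteMeasure ρ]

theorem isFiniteMeasure (h : IsRatCDFDensity ρ m g) {A : Set Z} (hA : MeasurableSet A) :
    IsFiniteMeasure (m A) :=
  ⟨by rw [h.apply_univ hA]; exact measure_lt_top ρ A⟩

theorem ae_monotone (h : IsRatCDFDensity ρ m g) : ∀ᵐ z ∂ρ, Monotone fun q => g q z := by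
  have hle : ∀ q r : ℚ, q ≤ r → g q ≤ᵐ[ρ] g r := fun q r hqr =>
    ae_le_of_forall_setLIntegral_le_of_sigmaFinite (h.measurable q) fun A hA _ => by
      rw [h.setLIntegral_eq q hA, h.setLIntegral_eq r hA]
      exact measure_mono (Iic_subset_Iic.2 (by exact_mod_cast hqr))
  unfold Monotone
  simp_rw [ae_all_iff]
  exact hle

theorem ae_le_one (h : IsRatCDFDensity ρ m g) : ∀ᵐ z ∂ρ, ∀ q, g q z ≤ 1 :=
  ae_all_iff.2 fun q => ae_le_of_forall_setLIntegral_le_of_sigmaFinite (h.measurable q)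
    fun A hA _ => by
      rw [h.setLIntegral_eq q hA, setLIntegral_one, ← h.apply_univ hA]
      exact measure_mono (subset_univ _)

theorem ae_tendsto_one (h : IsRatCDFDensity ρ m g) :
    ∀ᵐ z ∂ρ, Tendsto (fun n : ℕ => g n z) atTop (𝓝 1) := by
  refine tendsto_of_lintegral_tendsto_of_monotone aemeasurable_const ?_ ?_ ?_ (by simp)
  · simp_rw [h.lintegral_eq, lintegral_const, one_mul, ← h.apply_univ .univ, Rat.cast_natCast]
    exact (tendsto_measure_Iic_atTop _).comp tendsto_natCast_atTop_atTop
  · filter_upwards [h.ae_monotone] with z hz using fun i j hij => hz (by exact_mod_cast hij)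
  · filter_upwards [h.ae_le_one] with z hz using fun n => hz n

theorem ae_tendsto_zero (h : IsRatCDFDensity ρ m g) :
    ∀ᵐ z ∂ρ, Tendsto (fun n : ℕ => g (-n) z) atTop (𝓝 0) := by
  have := h.isFiniteMeasure .univ
  refine tendsto_of_lintegral_tendsto_of_antitone (F := 0)
    (fun n => (h.measurable _).aemeasurable) ?_ ?_ (by simp) (by simp [h.lintegral_eq])
  · have hempty : ⋂ n : ℕ, Iic (-(n : ℝ)) = ∅ := by
      refine iInter_Iic_eq_empty_iff.2 fun ⟨x, hx⟩ => ?_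
      obtain ⟨n, hn⟩ := exists_nat_gt (-x)
      exact absurd (hx ⟨n, rfl⟩) (by linarith)
    have := tendsto_measure_iInter_atTop (μ := m univ)
      (fun n => measurableSet_Iic.nullMeasurableSet)
      (fun i j hij => Iic_subset_Iic.2 (neg_le_neg (Nat.cast_le.2 hij))) ⟨0, measure_ne_top _ _⟩
    simp_rw [h.lintegral_eq, Pi.zero_apply, lintegral_zero]
    simpa [hempty, Function.comp_def] using this
  · filter_upwards [h.ae_monotone] with z hz using
      fun i j hij => hz (neg_le_neg (by exact_mod_cast hij))

theorem ae_tendsto_right (h : IsRatCDFDensity ρ m g) (q : ℚ) :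
    ∀ᵐ z ∂ρ, Tendsto (fun n : ℕ => g (q + ((n : ℚ) + 1)⁻¹) z) atTop (𝓝 (g q z)) := by
  have := h.isFiniteMeasure .univ
  have hanti : Antitone fun n : ℕ => q + ((n : ℚ) + 1)⁻¹ := fun i j hij => by
    dsimp only
    gcongr
  refine tendsto_of_lintegral_tendsto_of_antitone (fun n => (h.measurable _).aemeasurable) ?_ ?_
    ?_ (by simp [h.lintegral_eq])
  · have hinter : ⋂ n : ℕ, Iic ((q : ℝ) + ((n : ℝ) + 1)⁻¹) = Iic (q : ℝ) := by
      ext x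
      simp only [mem_iInter, mem_Iic]
      refine ⟨fun hx => le_of_forall_pos_le_add fun ε hε => ?_, fun hx n => hx.trans ?_⟩
      · obtain ⟨n, hn⟩ := exists_nat_one_div_lt hε
        refine (hx n).trans ?_
        rw [one_div] at hn
        linarith
      · linarith [show (0 : ℝ) < ((n : ℝ) + 1)⁻¹ by positivity]
    have := tendsto_measure_iInter_atTop (μ := m univ)
      (fun n => measurableSet_Iic.nullMeasurableSet)
      (fun i j hij => Iic_subset_Iic.2 (Rat.cast_le.2 (hanti hij))) ⟨0, measure_ne_top _ _⟩
    simp_rw [h.lintegral_eq]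
    simpa [hinter, Function.comp_def] using this
  · filter_upwards [h.ae_monotone] with z hz using fun i j hij => hz (hanti hij)
  · filter_upwards [h.ae_monotone] with z hz using
      fun n => hz (le_add_of_nonneg_right (by positivity))

theorem ae_isRatStieltjesPoint (h : IsRatCDFDensity ρ m g) :
    ∀ᵐ z ∂ρ, IsRatStieltjesPoint (fun z q => (g q z).toReal) z := by
  filter_upwards [h.ae_monotone, h.ae_le_one, h.ae_tendsto_one, h.ae_tendsto_zero,
    ae_all_iff.2 h.ae_tendsto_right] with z hmono hle htop hbot hright
  exact isRatStieltjesPoint_toReal hmono hle htop hbot hright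

theorem exists_kernel (h : IsRatCDFDensity ρ m g) :
    ∃ K : Kernel Z ℝ, IsMarkovKernel K ∧ ∀ q : ℚ, ∀ᵐ z ∂ρ, K z (Iic q) = g q z := by
  have hf : Measurable fun z q => (g q z).toReal :=
    measurable_pi_iff.2 fun q => (h.measurable q).ennreal_toReal
  refine ⟨⟨fun z => (stieltjesOfMeasurableRat _ hf z).measure,
      measurable_measure_stieltjesOfMeasurableRat hf⟩,
    ⟨fun z => inferInstanceAs (IsProbabilityMeasure (stieltjesOfMeasurableRat _ hf z).measure)⟩,
    fun q => ?_⟩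
  filter_upwards [h.ae_isRatStieltjesPoint, h.ae_le_one] with z hz hle
  rw [Kernel.coe_mk, measure_stieltjesOfMeasurableRat_Iic, stieltjesOfMeasurableRat_eq,
    toRatCDF_of_isRatStieltjesPoint hz,
    ENNReal.ofReal_toReal (ne_top_of_le_ne_top ENNReal.one_ne_top (hle q))]

theorem exists_measure_prod (h : IsRatCDFDensity ρ m g) :
    ∃ μ : Measure (Z × ℝ), ∀ A S, MeasurableSet A → MeasurableSet S → μ (A ×ˢ S) = m A S := by
  obtain ⟨K, hK, hKg⟩ := h.exists_kernel
  refine ⟨ρ ⊗ₘ K, fun A S hA hS => ?_⟩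
  have := h.isFiniteMeasure hA
  have hcomp : m A = K ∘ₘ ρ.restrict A := by
    refine Measure.ext_of_Iic_rat_s8 (fun q => ?_) ?_
    · rw [Measure.bind_apply measurableSet_Iic K.aemeasurable, ← h.setLIntegral_eq q hA]
      exact (lintegral_congr_ae (ae_restrict_of_ae (hKg q))).symm
    · simp [Measure.bind_apply .univ K.aemeasurable, h.apply_univ hA]
  rw [Measure.compProd_apply_prod hA hS, hcomp, Measure.bind_apply hS K.aemeasurable]

end IsRatCDFDensity

variable {Y : Type*} [MeasurableSpace Y]

structure IsBimeasure (β : Set Z → Set Y → ℝ≥0∞) : Prop where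
  exists_measure_left (S : Set Y) :
    MeasurableSet S → ∃ m : Measure Z, ∀ A, MeasurableSet A → m A = β A S
  exists_measure_right (A : Set Z) :
    MeasurableSet A → ∃ m : Measure Y, ∀ S, MeasurableSet S → m S = β A S

namespace IsBimeasure

theorem of_isPiSystem {C : Set (Set Y)} (hgen : ‹MeasurableSpace Y› = .generateFrom C)
    (hC : IsPiSystem C) (huniv : univ ∈ C) (κ : Set Z → Measure Y)
    (hκ : ∀ A, MeasurableSet A → IsFiniteMeasure (κ A))
    (hκC : ∀ S ∈ C, ∃ m : Measure Z, ∀ A, MeasurableSet A → m A = κ A S) :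
    IsBimeasure fun A S => κ A S := by
  refine ⟨fun S hS => ?_, fun A _ => ⟨κ A, fun _ _ => rfl⟩⟩
  have hempty : κ ∅ = 0 := by
    have := hκ ∅ .empty
    have hagree : ∀ s ∈ C, κ ∅ s = (0 : Measure Y) s := fun s hs => by
      obtain ⟨m, hm⟩ := hκC s hs
      rw [← hm ∅ .empty, measure_empty, Measure.coe_zero, Pi.zero_apply]
    exact ext_of_generate_finite C hgen hC hagree (hagree univ huniv)
  have hUnion : ∀ ⦃A : ℕ → Set Z⦄, (∀ k, MeasurableSet (A k)) →
      Pairwise (Function.onFun Disjoint A) → κ (⋃ k, A k) = Measure.sum fun k => κ (A k) := by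
    intro A hA hdisj
    have := hκ _ (.iUnion hA)
    have hagree : ∀ s ∈ C, κ (⋃ k, A k) s = Measure.sum (fun k => κ (A k)) s := fun s hs => by
      obtain ⟨m, hm⟩ := hκC s hs
      rw [Measure.sum_apply _ (hgen ▸ .basic _ hs), ← hm _ (.iUnion hA), measure_iUnion hdisj hA]
      exact tsum_congr fun k => hm _ (hA k)
    exact ext_of_generate_finite C hgen hC hagree (hagree univ huniv)
  refine ⟨.ofMeasurable (fun A _ => κ A S) (by simp [hempty]) fun A hA hdisj => ?_,
    fun A hA => Measure.ofMeasurable_apply A hA⟩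
  simp only [hUnion hA hdisj, Measure.sum_apply _ hS]

theorem map_right {β : Set Z → Set Y → ℝ≥0∞} (hβ : IsBimeasure β) {Y' : Type*}
    [MeasurableSpace Y'] {f : Y → Y'} (hf : Measurable f) :
    IsBimeasure fun A T => β A (f ⁻¹' T) where
  exists_measure_left T hT := hβ.exists_measure_left _ (hf hT)
  exists_measure_right A hA := by
    obtain ⟨m, hm⟩ := hβ.exists_measure_right A hA
    exact ⟨m.map f, fun T hT => by rw [Measure.map_apply hf hT, hm _ (hf hT)]⟩

theorem exists_measure_prod_real {β : Set Z → Set ℝ → ℝ≥0∞} (hβ : IsBimeasure β)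
    (hfin : β univ univ ≠ ∞) :
    ∃ μ : Measure (Z × ℝ), ∀ A S, MeasurableSet A → MeasurableSet S → μ (A ×ˢ S) = β A S := by
  choose! m hm using hβ.exists_measure_right
  obtain ⟨ρ, hρ⟩ := hβ.exists_measure_left univ .univ
  have hρA : ∀ A, MeasurableSet A → ρ A = m A univ := fun A hA => by
    rw [hρ A hA, hm A hA univ .univ]
  have : IsFiniteMeasure ρ := ⟨by rw [hρ univ .univ]; exact hfin.lt_top⟩
  choose ψ hψ using fun q : ℚ => hβ.exists_measure_left (Iic q) measurableSet_Iic
  have hψρ : ∀ q, ψ q ≤ ρ := fun q => Measure.le_iff.2 fun A hA => by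
    rw [hψ q A hA, ← hm A hA _ measurableSet_Iic, hρA A hA]
    exact measure_mono (subset_univ _)
  have := fun q => isFiniteMeasure_of_le ρ (hψρ q)
  have hdens : IsRatCDFDensity ρ m fun q => (ψ q).rnDeriv ρ := by
    refine ⟨fun q => Measure.measurable_rnDeriv _ _, fun q A hA => ?_, fun hA => (hρA _ hA).symm⟩
    rw [Measure.setLIntegral_rnDeriv' (Measure.absolutelyContinuous_of_le (hψρ q)) hA,
      hψ q A hA, hm A hA _ measurableSet_Iic]
  obtain ⟨μ, hμ⟩ := hdens.exists_measure_prod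
  exact ⟨μ, fun A S hA hS => by rw [hμ A S hA hS, hm A hA S hS]⟩

theorem exists_measure_prod [StandardBorelSpace Y] {β : Set Z → Set Y → ℝ≥0∞}
    (hβ : IsBimeasure β) (hfin : β univ univ ≠ ∞) :
    ∃ μ : Measure (Z × Y), ∀ A S, MeasurableSet A → MeasurableSet S → μ (A ×ˢ S) = β A S := by
  have he := measurableEmbedding_embeddingReal Y
  obtain ⟨μ, hμ⟩ := (hβ.map_right he.measurable).exists_measure_prod_real hfin
  refine ⟨μ.comap (Prod.map id (embeddingReal Y)), fun A S hA hS => ?_⟩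
  rw [(MeasurableEmbedding.id.prodMap he).comap_apply, prodMap_image_prod, image_id,
    hμ A _ hA (he.measurableSet_image' hS), he.injective.preimage_image]

end IsBimeasure

theorem Measurable.finCons {α : Type*} [MeasurableSpace α] {n : ℕ} {X : Fin (n + 1) → Type*}
    [∀ i, MeasurableSpace (X i)] {f : α → X 0} {g : α → ∀ j : Fin n, X j.succ}
    (hf : Measurable f) (hg : Measurable g) :
    Measurable fun a => (Fin.cons (f a) (g a) : ∀ i, X i) :=
  measurable_pi_iff.2 <| Fin.cases hf fun j => (measurable_pi_apply j).comp hg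

theorem preimage_finCons_univ_pi {n : ℕ} {X : Fin (n + 1) → Type*} (B : ∀ i, Set (X i)) :
    (fun p : X 0 × (∀ j : Fin n, X j.succ) => (Fin.cons p.1 p.2 : ∀ i, X i)) ⁻¹' univ.pi B =
      B 0 ×ˢ univ.pi (Fin.tail B) := by
  ext ⟨a, b⟩
  simp [Fin.forall_fin_succ, Fin.tail]

theorem exists_measure_pi_of_separately {n : ℕ} {X : Fin n → Type*}
    [∀ i, MeasurableSpace (X i)] [∀ i, StandardBorelSpace (X i)]
    (ν : (∀ i, Set (X i)) → ℝ≥0∞) (hfin : ∀ B, ν B ≠ ∞)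
    (hν : ∀ (i : Fin n) (B : ∀ j, Set (X j)), (∀ j, MeasurableSet (B j)) →
      ∃ m : Measure (X i), ∀ C, MeasurableSet C → m C = ν (Function.update B i C)) :
    ∃ μ : Measure (∀ i, X i),
      ∀ B : ∀ i, Set (X i), (∀ i, MeasurableSet (B i)) → μ (univ.pi B) = ν B := by
  induction n with
  | zero =>
    refine ⟨ν (fun _ => univ) • Measure.dirac isEmptyElim, fun B _ => ?_⟩
    simp [Subsingleton.elim B fun _ => univ]
  | succ n ih =>
    have hcons : ∀ {A : Set (X 0)} {B : ∀ j : Fin n, Set (X j.succ)}, MeasurableSet A →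
        (∀ j, MeasurableSet (B j)) → ∀ i, MeasurableSet ((Fin.cons A B : ∀ i, Set (X i)) i) :=
      fun hA hB => Fin.cases hA hB
    have hslice : ∀ A, MeasurableSet A → ∃ μ : Measure (∀ j : Fin n, X j.succ),
        ∀ B, (∀ j, MeasurableSet (B j)) → μ (univ.pi B) = ν (Fin.cons A B) := fun A hA =>
      ih (fun B => ν (Fin.cons A B)) (fun B => hfin _) fun i B hB => by
        obtain ⟨m, hm⟩ := hν i.succ _ (hcons hA hB)
        exact ⟨m, fun C hC => by rw [hm C hC, Fin.cons_update]⟩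
    choose! κ hκ using hslice
    have hκuniv : ∀ A, MeasurableSet A → κ A univ = ν (Fin.cons A fun _ => univ) :=
      fun A hA => by
        rw [← hκ A hA _ fun _ => .univ, pi_univ]
    have hκfin : ∀ A, MeasurableSet A → IsFiniteMeasure (κ A) := fun A hA =>
      ⟨by rw [hκuniv A hA]; exact (hfin _).lt_top⟩
    have hβ : IsBimeasure fun A S => κ A S := by
      refine .of_isPiSystem generateFrom_pi.symm isPiSystem_pi
        ⟨fun _ => univ, fun _ _ => .univ, pi_univ _⟩ κ hκfin ?_
      rintro _ ⟨B, hB, rfl⟩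
      obtain ⟨m, hm⟩ := hν 0 _ (hcons .univ fun j => hB j trivial)
      exact ⟨m, fun A hA => by
        rw [hm A hA, Fin.update_cons_zero, hκ A hA B fun j => hB j trivial]⟩
    obtain ⟨μ, hμ⟩ := hβ.exists_measure_prod (by rw [hκuniv univ .univ]; exact hfin _)
    refine ⟨μ.map fun p => Fin.cons p.1 p.2, fun B hB => ?_⟩
    rw [Measure.map_apply (measurable_fst.finCons measurable_snd) (.univ_pi hB),
      preimage_finCons_univ_pi,
      hμ (B 0) (univ.pi (Fin.tail B)) (hB 0) (.univ_pi fun j => hB j.succ),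
      hκ (B 0) (hB 0) (Fin.tail B) fun j => hB j.succ,
      Fin.cons_self_tail]

end MeasureTheory

open MeasureTheory

theorem exists_unique_product_measure_of_separately_measure_general (n : ℕ)
    (X : Fin n → Type*) [∀ i, MetricSpace (X i)] [∀ i, CompleteSpace (X i)]
    [∀ i, TopologicalSpace.SeparableSpace (X i)]
    [∀ i, MeasurableSpace (X i)] [∀ i, BorelSpace (X i)]
    (ν : (∀ i, Set (X i)) → ENNReal) (hfin : ∀ B, ν B ≠ ⊤)
    (hνmeas : ∀ (i : Fin n) (B : ∀ j, Set (X j)), (∀ j, MeasurableSet (B j)) →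
      ∃ m : Measure (X i), ∀ C : Set (X i), MeasurableSet C →
        m C = ν (Function.update B i C)) :
    ∃! μ : Measure (∀ i, X i),
      ∀ B : ∀ i, Set (X i), (∀ i, MeasurableSet (B i)) → μ (Set.univ.pi B) = ν B := by
  have (i : Fin n) : SecondCountableTopology (X i) := UniformSpace.secondCountable_of_separable _
  obtain ⟨μ, hμ⟩ := exists_measure_pi_of_separately ν hfin hνmeas
  have : IsFiniteMeasure μ := ⟨by rw [← pi_univ, hμ _ fun _ => .univ]; exact (hfin _).lt_top⟩
  refine ⟨μ, hμ, fun μ' hμ' => (Measure.ext_of_univ_pi fun B hB => ?_).symm⟩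
  rw [hμ B hB, hμ' B hB]

/-- Let `X₁, …, Xₙ` be uncountable complete separable metric spaces and
let `ν` be a set function on `B(X₁) × ⋯ × B(Xₙ)` with values in `[0,∞)` which is a
countably additive measure in each coordinate separately.  Then there is a unique measure
`μ` on the product σ-algebra with `μ(B₁ × ⋯ × Bₙ) = ν(B₁,…,Bₙ)` for all Borel `Bᵢ`. -/
theorem exists_unique_product_measure_of_separately_measure (n : ℕ)
    (X : Fin n → Type*) [∀ i, MetricSpace (X i)] [∀ i, CompleteSpace (X i)]
    [∀ i, TopologicalSpace.SeparableSpace (X i)] [∀ i, Uncountable (X i)]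
    [∀ i, MeasurableSpace (X i)] [∀ i, BorelSpace (X i)]
    (ν : (∀ i, Set (X i)) → ENNReal) (hfin : ∀ B, ν B ≠ ⊤)
    (hνmeas : ∀ (i : Fin n) (B : ∀ j, Set (X j)), (∀ j, MeasurableSet (B j)) →
      ∃ m : Measure (X i), ∀ C : Set (X i), MeasurableSet C →
        m C = ν (Function.update B i C)) :
    ∃! μ : Measure (∀ i, X i),
      ∀ B : ∀ i, Set (X i), (∀ i, MeasurableSet (B i)) → μ (Set.univ.pi B) = ν B :=
  exists_unique_product_measure_of_separately_measure_general n X ν hfin hνmeas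
end
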